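/- arXiv:math-ph/0410030 — 4 statements merged into one kernel-verified Lean document; each statement's English description precedes it below -/
import Mathlib

section
/- Let d ≥ 1 and ω ∈ ℝ^d. Let f : ℝ → ℝ be a real-valued quasi-periodic function with frequency vector ω, i.e. f(t) = ∑_{ν∈ℤ^d} c_ν e^{i(ω·ν)t} with ∑_{ν∈ℤ^d} |c_ν| < ∞. If the function t ↦ exp(∫₀ᵗ f(s) ds) is bounded on ℝ, then the average ⟨f⟩ = lim_{T→∞} (1/(2T)) ∫_{−T}^{T} f(t) dt exists and equals 0. -/
/-! The average of `∑ c_ν e^{i λ_ν t}` over an interval whose length tends to infinity converges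
to the sum of the zero-frequency coefficients: by dominated convergence, since every nonzero
frequency contributes `O(1 / length)`. If `exp F ≤ M` with `F t = ∫₀ᵗ f`, then `F ≤ log M`, so the
averages `F T / T` over `[0, T]` and `-F (-T) / T` over `[-T, 0]` have limits `≤ 0` and `≥ 0`
respectively; both limits are the mean of `f`, which therefore vanishes. -/

open Filter Topology Complex MeasureTheory

section TrigonometricSeries

variable {ι α : Type*} {l : Filter α} {u v : α → ℝ}

lemma norm_cexp_I_mul_ofReal_mul (r t : ℝ) : ‖cexp (I * r * t)‖ = 1 := by
  rw [mul_assoc, ← ofReal_mul, norm_exp_I_mul_ofReal]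

lemma norm_integral_cexp_I_mul_le {r : ℝ} (hr : r ≠ 0) (a b : ℝ) :
    ‖∫ t in a..b, cexp (I * r * t)‖ ≤ 2 / |r| := by
  have hIr : I * (r : ℂ) ≠ 0 := mul_ne_zero I_ne_zero (ofReal_ne_zero.mpr hr)
  rw [integral_exp_mul_complex hIr, norm_div, norm_mul, norm_I, one_mul, norm_real,
    Real.norm_eq_abs]
  gcongr
  calc _ ≤ ‖cexp (I * r * b)‖ + ‖cexp (I * r * a)‖ := norm_sub_le _ _
    _ = 2 := by rw [norm_cexp_I_mul_ofReal_mul, norm_cexp_I_mul_ofReal_mul]; norm_num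

lemma norm_average_cexp_I_mul_le_one (r a b : ℝ) :
    ‖(b - a)⁻¹ • ∫ t in a..b, cexp (I * r * t)‖ ≤ 1 := by
  have h : ‖∫ t in a..b, cexp (I * r * t)‖ ≤ 1 * |b - a| :=
    intervalIntegral.norm_integral_le_of_norm_le_const
      fun t _ => (norm_cexp_I_mul_ofReal_mul r t).le
  rw [norm_smul, norm_inv, Real.norm_eq_abs]
  exact inv_mul_le_one_of_le₀ (h.trans_eq (one_mul _)) (abs_nonneg _)

lemma tendsto_average_cexp_I_mul (r : ℝ) (huv : Tendsto (v - u) l atTop) :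
    Tendsto (fun x => (v x - u x)⁻¹ • ∫ t in u x..v x, cexp (I * r * t)) l
      (𝓝 (if r = 0 then 1 else 0)) := by
  have hpos : ∀ᶠ x in l, 0 < v x - u x := huv.eventually_gt_atTop 0
  split_ifs with hr
  · refine tendsto_const_nhds.congr' ?_
    filter_upwards [hpos] with x hx
    simp only [hr, ofReal_zero, mul_zero, zero_mul, Complex.exp_zero]
    rw [intervalIntegral.integral_const, smul_smul, inv_mul_cancel₀ hx.ne', one_smul]
  · refine squeeze_zero_norm' ?_ (by simpa using huv.inv_tendsto_atTop.mul_const (2 / |r|))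
    filter_upwards [hpos] with x hx
    rw [norm_smul, Real.norm_of_nonneg (inv_nonneg.2 hx.le)]
    exact mul_le_mul_of_nonneg_left (norm_integral_cexp_I_mul_le hr _ _) (inv_nonneg.2 hx.le)

variable [Countable ι] {c : ι → ℂ} {r : ι → ℝ}

lemma hasSum_intervalIntegral_tsum_cexp (hc : Summable (‖c ·‖)) (a b : ℝ) :
    HasSum (fun ν => c ν * ∫ t in a..b, cexp (I * r ν * t))
      (∫ t in a..b, ∑' ν, c ν * cexp (I * r ν * t)) := by
  have hbound (ν : ι) (t : ℝ) : ‖c ν * cexp (I * r ν * t)‖ = ‖c ν‖ := by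
    rw [norm_mul, norm_cexp_I_mul_ofReal_mul, mul_one]
  simp_rw [← intervalIntegral.integral_const_mul]
  refine intervalIntegral.hasSum_integral_of_dominated_convergence (fun ν _ => ‖c ν‖)
    (fun ν => (by fun_prop : Continuous _).aestronglyMeasurable)
    (fun ν => ae_of_all _ fun t _ => (hbound ν t).le) (ae_of_all _ fun _ _ => hc)
    intervalIntegrable_const (ae_of_all _ fun t _ => ?_)
  exact (hc.of_norm_bounded fun ν => (hbound ν t).le).hasSum

theorem tendsto_average_tsum_cexp (hc : Summable (‖c ·‖)) (huv : Tendsto (v - u) l atTop) :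
    Tendsto (fun x => (v x - u x)⁻¹ • ∫ t in u x..v x, ∑' ν, c ν * cexp (I * r ν * t)) l
      (𝓝 (∑' ν, if r ν = 0 then c ν else 0)) := by
  have hsum (x : α) : (v x - u x)⁻¹ • ∫ t in u x..v x, ∑' ν, c ν * cexp (I * r ν * t) =
      ∑' ν, c ν * ((v x - u x)⁻¹ • ∫ t in u x..v x, cexp (I * r ν * t)) := by
    simp_rw [mul_smul_comm]
    exact (((hasSum_intervalIntegral_tsum_cexp hc _ _).const_smul _).tsum_eq).symm
  simp_rw [hsum]
  refine tendsto_tsum_of_dominated_convergence hc (fun ν => ?_) ?_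
  · simpa [mul_ite] using (tendsto_average_cexp_I_mul (r ν) huv).const_mul (c ν)
  · refine Eventually.of_forall fun x ν => ?_
    rw [norm_mul]
    exact mul_le_of_le_one_right (norm_nonneg _) (norm_average_cexp_I_mul_le_one _ _ _)

theorem tendsto_average_of_ofReal_eq_tsum_cexp {f : ℝ → ℝ} (hc : Summable (‖c ·‖))
    (hf : ∀ t, (f t : ℂ) = ∑' ν, c ν * cexp (I * r ν * t)) (huv : Tendsto (v - u) l atTop) :
    Tendsto (fun x => (v x - u x)⁻¹ * ∫ t in u x..v x, f t) l
      (𝓝 (∑' ν, if r ν = 0 then c ν else 0).re) := by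
  have h := tendsto_average_tsum_cexp (r := r) hc huv
  simp only [← hf, intervalIntegral.integral_ofReal, real_smul, ← ofReal_mul] at h
  exact ((continuous_re.tendsto _).comp h).congr fun x => ofReal_re _

end TrigonometricSeries

lemma nonpos_of_tendsto_inv_mul_of_le {F : ℝ → ℝ} {m C : ℝ} (hF : ∀ T, F T ≤ C)
    (h : Tendsto (fun T => T⁻¹ * F T) atTop (𝓝 m)) : m ≤ 0 := by
  refine le_of_tendsto_of_tendsto h (by simpa using tendsto_inv_atTop_zero.mul_const C) ?_
  filter_upwards [eventually_gt_atTop 0] with T hT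
  exact mul_le_mul_of_nonneg_left (hF T) (inv_nonneg.2 hT.le)

theorem bounded_exponential_implies_zero_average_general
    (d : ℕ) (ω : Fin d → ℝ) (f : ℝ → ℝ)
    (c : (Fin d → ℤ) → ℂ) (hc : Summable (fun ν => ‖c ν‖))
    (hf : ∀ t : ℝ, (f t : ℂ) = ∑' ν : Fin d → ℤ,
      c ν * Complex.exp (Complex.I * (∑ i, ω i * (ν i : ℝ)) * t))
    (M : ℝ) (hM : ∀ t : ℝ, Real.exp (∫ s in (0:ℝ)..t, f s) ≤ M) :
    Tendsto (fun T : ℝ => (1 / (2 * T)) * ∫ t in (-T)..T, f t) atTop (nhds 0) := by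
  set m := (∑' ν : Fin d → ℤ, if ∑ i, ω i * (ν i : ℝ) = 0 then c ν else 0).re
  have havg (u v : ℝ → ℝ) (huv : Tendsto (v - u) atTop atTop) :
      Tendsto (fun T => (v T - u T)⁻¹ * ∫ t in u T..v T, f t) atTop (𝓝 m) :=
    tendsto_average_of_ofReal_eq_tsum_cexp hc (by exact_mod_cast hf) huv
  have hlog (t : ℝ) : ∫ s in (0:ℝ)..t, f s ≤ Real.log M :=
    (Real.le_log_iff_exp_le ((Real.exp_pos _).trans_le (hM 0))).2 (hM t)
  have hm_nonpos : m ≤ 0 :=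
    nonpos_of_tendsto_inv_mul_of_le hlog (by simpa using havg 0 id (by simpa using tendsto_id))
  have hm_nonneg : 0 ≤ m := by
    refine neg_nonpos.1 (nonpos_of_tendsto_inv_mul_of_le (F := fun T => -∫ t in (-T)..0, f t)
      (fun T => by rw [intervalIntegral.integral_symm, neg_neg]; exact hlog _) ?_)
    simpa using (havg (-id) 0 (by simpa using tendsto_id)).neg
  have h := havg (-id) id <|
    (tendsto_id.const_mul_atTop two_pos).congr fun T => by simp [two_mul]
  rw [le_antisymm hm_nonpos hm_nonneg] at h
  simpa [← two_mul] using h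

/-- If `f` is a real-valued quasi-periodic function and `t ↦ exp(∫₀ᵗ f)` is
bounded on `ℝ`, then the average of `f` exists and equals `0`. -/
theorem bounded_exponential_implies_zero_average
    (d : ℕ) (hd : 1 ≤ d) (ω : Fin d → ℝ) (f : ℝ → ℝ)
    (c : (Fin d → ℤ) → ℂ) (hc : Summable (fun ν => ‖c ν‖))
    (hf : ∀ t : ℝ, (f t : ℂ) = ∑' ν : Fin d → ℤ,
      c ν * Complex.exp (Complex.I * (∑ i, ω i * (ν i : ℝ)) * t))
    (M : ℝ) (hM : ∀ t : ℝ, Real.exp (∫ s in (0:ℝ)..t, f s) ≤ M) :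
    Tendsto (fun T : ℝ => (1 / (2 * T)) * ∫ t in (-T)..T, f t) atTop (nhds 0) :=
  bounded_exponential_implies_zero_average_general d ω f c hc hf M hM
end

section
/- Let n ≥ 2 and let λ₁, …, λ_n ∈ ℂ satisfy λ₁ + ⋯ + λ_n = 0 and ∑_{j∈S} λ_j ≠ 0 for every nonempty proper subset S ⊊ {1, …, n}. Then ∑_{π ∈ S_n} ∏_{k=1}^{n−1} (λ_{π(1)} + λ_{π(2)} + ⋯ + λ_{π(k)})^{−1} = 0, where S_n denotes the group of all permutations of {1, …, n} (all denominators are nonzero by hypothesis). -/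
/-!
Write `P(f) = ∑_π ∏_k (f (π k) + ⋯ + f (π (m - 1)))⁻¹` for the suffix-sum analogue of the sum in the
theorem. Splitting off `j = π 0` gives `P(f) = (∑ f)⁻¹ ∑_j P(f without j)`, so by induction
`P(f) = ∏ (f i)⁻¹` as soon as no nonempty subset sum of `f` vanishes. Reversing `π` turns the
prefix sums of the theorem into suffix sums lacking the factor of the full sum, so the sum in the
theorem is `∑_j P(λ without j) = ∑_j λ_j ∏ λ_i⁻¹ = (∑ λ_j) ∏ λ_i⁻¹ = 0`.
-/

open Finset Equiv

theorem Fin.sum_Ici_rev {M : Type*} [AddCommMonoid M] {n : ℕ} (g : Fin n → M) (k : Fin n) :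
    ∑ i ∈ Ici k.rev, g i.rev = ∑ i ∈ Iic k, g i := by
  rw [← Fin.map_revPerm_Iic, sum_map]
  simp

section

variable {K : Type*} [Field K]

def prodInvSuffixSums {m : ℕ} (f : Fin m → K) : K :=
  ∏ k, (∑ i ∈ Ici k, f i)⁻¹

theorem prodInvSuffixSums_succ {m : ℕ} (f : Fin (m + 1) → K) :
    prodInvSuffixSums f = (∑ i, f i)⁻¹ * prodInvSuffixSums (f ∘ Fin.succ) := by
  simp only [prodInvSuffixSums, Fin.prod_univ_succ, Fin.sum_Ici_succ, Function.comp_apply]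
  congr
  simp

theorem sum_perm_prodInvSuffixSums_comp_succ {m : ℕ} (f : Fin (m + 1) → K) :
    ∑ π : Perm (Fin (m + 1)), prodInvSuffixSums (f ∘ π ∘ Fin.succ) =
      ∑ j, ∑ σ : Perm (Fin m), prodInvSuffixSums ((f ∘ swap 0 j ∘ Fin.succ) ∘ σ) := by
  rw [← Perm.decomposeFin.symm.sum_comp, Fintype.sum_prod_type]
  refine sum_congr rfl fun j _ => sum_congr rfl fun σ _ => congrArg _ ?_
  ext i
  simp

theorem sum_comp_swap_succ_ne_zero {m : ℕ} {f : Fin (m + 1) → K}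
    (hf : ∀ S : Finset (Fin (m + 1)), S.Nonempty → S ≠ univ → ∑ i ∈ S, f i ≠ 0)
    (j : Fin (m + 1)) (S : Finset (Fin m)) (hS : S.Nonempty) :
    ∑ i ∈ S, f (swap 0 j i.succ) ≠ 0 := by
  let e : Fin m ↪ Fin (m + 1) := (Fin.succEmb m).trans (swap 0 j).toEmbedding
  have hj : j ∉ S.map e := by
    simp [e, swap_apply_eq_iff, Fin.succ_ne_zero]
  simpa [e] using hf (S.map e) hS.map (ne_of_mem_of_not_mem' (mem_univ j) hj).symm

theorem prod_inv_comp_swap_succ {m : ℕ} {f : Fin (m + 1) → K} (j : Fin (m + 1))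
    (hj : f j ≠ 0) : ∏ i : Fin m, (f (swap 0 j i.succ))⁻¹ = f j * ∏ i, (f i)⁻¹ := by
  rw [← Equiv.prod_comp (swap 0 j), Fin.prod_univ_succ, swap_apply_left, mul_inv_cancel_left₀ hj]

/-- The identity `sum_perm_prodInvSuffixSums` on `Fin m` enters as the hypothesis `hC`, so that this
lemma serves both as its induction step and for the theorem. -/
theorem sum_perm_prodInvSuffixSums_comp_succ_eq {m : ℕ}
    (hC : ∀ g : Fin m → K, (∀ S : Finset (Fin m), S.Nonempty → ∑ i ∈ S, g i ≠ 0) →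
      ∑ σ : Perm (Fin m), prodInvSuffixSums (g ∘ σ) = ∏ i, (g i)⁻¹)
    {f : Fin (m + 1) → K} (hf₀ : ∀ j, f j ≠ 0)
    (hf : ∀ S : Finset (Fin (m + 1)), S.Nonempty → S ≠ univ → ∑ i ∈ S, f i ≠ 0) :
    ∑ π : Perm (Fin (m + 1)), prodInvSuffixSums (f ∘ π ∘ Fin.succ) =
      (∑ j, f j) * ∏ j, (f j)⁻¹ := by
  rw [sum_perm_prodInvSuffixSums_comp_succ, sum_mul]
  refine sum_congr rfl fun j _ => ?_
  rw [hC (f ∘ swap 0 j ∘ Fin.succ) (sum_comp_swap_succ_ne_zero hf j)]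
  exact prod_inv_comp_swap_succ j (hf₀ j)

theorem sum_perm_prodInvSuffixSums {m : ℕ} {f : Fin m → K}
    (hf : ∀ S : Finset (Fin m), S.Nonempty → ∑ i ∈ S, f i ≠ 0) :
    ∑ π : Perm (Fin m), prodInvSuffixSums (f ∘ π) = ∏ i, (f i)⁻¹ := by
  induction m with
  | zero => simp [prodInvSuffixSums]
  | succ m ih =>
    have hf₀ (j : Fin (m + 1)) : f j ≠ 0 := by simpa using hf {j} (singleton_nonempty j)
    simp only [prodInvSuffixSums_succ, Function.comp_apply, Equiv.sum_comp, Function.comp_assoc]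
    rw [← mul_sum, sum_perm_prodInvSuffixSums_comp_succ_eq (fun _ => ih) hf₀
      (fun S hS _ => hf S hS), inv_mul_cancel_left₀ (hf univ univ_nonempty)]

theorem prod_inv_prefix_sums_eq {m : ℕ} (g : Fin (m + 1) → K) :
    ∏ k : Fin m, (∑ i ∈ univ.filter (fun i : Fin (m + 1) => (i : ℕ) ≤ (k : ℕ)), g i)⁻¹ =
      prodInvSuffixSums (g ∘ Fin.rev ∘ Fin.succ) := by
  have hIic (k : Fin m) :
      univ.filter (fun i : Fin (m + 1) => (i : ℕ) ≤ (k : ℕ)) = Iic k.castSucc := by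
    ext; simp [Fin.le_def]
  rw [prodInvSuffixSums, ← Equiv.prod_comp Fin.revPerm]
  refine prod_congr rfl fun k _ => ?_
  rw [Fin.revPerm_apply, hIic, ← Fin.sum_Ici_rev, Fin.rev_castSucc, Fin.rev_rev,
    Fin.sum_Ici_succ (fun i => g i.rev)]
  rfl

theorem sum_perm_prod_inv_prefix_sums {m : ℕ} (f : Fin (m + 1) → K) :
    ∑ π : Perm (Fin (m + 1)), ∏ k : Fin m,
      (∑ i ∈ univ.filter (fun i : Fin (m + 1) => (i : ℕ) ≤ (k : ℕ)), f (π i))⁻¹ =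
      ∑ π : Perm (Fin (m + 1)), prodInvSuffixSums (f ∘ π ∘ Fin.succ) := by
  rw [← Equiv.sum_comp (Equiv.mulRight Fin.revPerm)]
  refine sum_congr rfl fun π _ => ?_
  rw [prod_inv_prefix_sums_eq]
  congr 1
  ext i
  simp

end

/-- Fixed-mode cancellation lemma: if `λ₁ + ⋯ + λ_n = 0` and no nonempty proper
subset of the `λ_j` has vanishing sum, then the sum over all permutations of the
products of reciprocals of partial sums vanishes. -/
theorem permutation_cancellation
    (n : ℕ) (hn : 2 ≤ n) (lam : Fin n → ℂ)
    (hsum : ∑ j, lam j = 0)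
    (hS : ∀ S : Finset (Fin n), S.Nonempty → S ≠ Finset.univ → ∑ j ∈ S, lam j ≠ 0) :
    ∑ π : Equiv.Perm (Fin n), ∏ k : Fin (n - 1),
      (∑ i ∈ Finset.univ.filter (fun i : Fin n => (i : ℕ) ≤ (k : ℕ)), lam (π i))⁻¹
      = 0 := by
  have : Nontrivial (Fin n) := Fin.nontrivial_iff_two_le.mpr hn
  have hlam₀ (j : Fin n) : lam j ≠ 0 := by
    simpa using hS {j} (singleton_nonempty j) (singleton_ne_univ j)
  obtain ⟨m, rfl⟩ : ∃ m, n = m + 1 := ⟨n - 1, by omega⟩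
  refine (sum_perm_prod_inv_prefix_sums lam).trans ?_
  rw [sum_perm_prodInvSuffixSums_comp_succ_eq
    (fun _ => sum_perm_prodInvSuffixSums) hlam₀ hS, hsum, zero_mul]
end

section
/- Let A ≥ 1, d = A + 2, and write elements of ℤ^d as ν = (m, n₁, n₂) with m ∈ ℤ^A and n₁, n₂ ∈ ℤ. Let ω ∈ ℝ^d satisfy ω·ν ≠ 0 for all ν ∈ ℤ^d∖{0}. Let Q, R : ℤ^d → ℂ be such that R_ν ≠ 0 only if n₂ = 2, and Q_ν ≠ 0 only if m = 0 and n₂ = −2. Let α : ℕ → ℂ be an arbitrary sequence, and suppose u : ℕ × ℤ^d → ℂ satisfies: u^{(k)}_0 = α^{(k)} for all k; u^{(0)}_ν = R_ν/(i ω·ν) for ν ≠ 0; and for k ≥ 1 and ν ≠ 0, u^{(k)}_ν = (i ω·ν)^{−1} ∑_{k₁+k₂=k−1} ∑_{ν₀+ν₁+ν₂=ν} Q_{ν₀} u^{(k₁)}_{ν₁} u^{(k₂)}_{ν₂}, where each of these sums converges absolutely. Then for every k ≥ 0 and every ν = (m, n₁, n₂) ∈ ℤ^d∖{0} with u^{(k)}_ν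 ≠ 0, the integer n₂ is even and satisfies −2k ≤ n₂ ≤ 2, i.e. n₂ ∈ {−2k, −2(k−1), …, −2, 0, 2}. -/
/-!
Grade each mode by its last component `n₂`. The source `R` lives in grade `2` and every
application of the quadratic recursion multiplies by `Q`, of grade `−2`, so a mode of `u^{(k)}`
built from modes of `u^{(k₁)}` and `u^{(k₂)}`, `k₁ + k₂ = k − 1`, has the sum of their grades
minus `2`. Strong induction on `k` then keeps the grade even and in `[−2k, 2]`.
-/

theorem exists_ne_zero_of_tsum_ne_zero {β M : Type*} [AddCommMonoid M] [TopologicalSpace M]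
    {f : β → M} (h : ∑' b, f b ≠ 0) : ∃ b, f b ≠ 0 :=
  Function.ne_iff.mp fun hf => h (hf ▸ tsum_zero)

theorem even_and_bounds_add_sub_two {k₁ k₂ : ℕ} {a b : ℤ}
    (ha : Even a ∧ -2 * (k₁ : ℤ) ≤ a ∧ a ≤ 2) (hb : Even b ∧ -2 * (k₂ : ℤ) ≤ b ∧ b ≤ 2) :
    Even (a + b - 2) ∧ -2 * ((k₁ + k₂ + 1 : ℕ) : ℤ) ≤ a + b - 2 ∧ a + b - 2 ≤ 2 := by
  obtain ⟨ha_even, ha_lower, ha_upper⟩ := ha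
  obtain ⟨hb_even, hb_lower, hb_upper⟩ := hb
  exact ⟨(ha_even.add hb_even).sub even_two, by push_cast; omega, by omega⟩

theorem grade_range_of_ne_zero {G 𝕜 : Type*} [AddCommGroup G] [DivisionRing 𝕜]
    [TopologicalSpace 𝕜] (deg : G →+ ℤ) (Q R c : G → 𝕜) (u : ℕ → G → 𝕜)
    (hR : ∀ ν, R ν ≠ 0 → deg ν = 2) (hQ : ∀ ν, Q ν ≠ 0 → deg ν = -2)
    (hu₀ : ∀ ν, ν ≠ 0 → u 0 ν = R ν / c ν)
    (hu : ∀ k, 1 ≤ k → ∀ ν, ν ≠ 0 →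
      u k ν = (c ν)⁻¹ * ∑ k₁ ∈ Finset.range k,
        ∑' p : G × G, Q p.1 * u k₁ p.2 * u (k - 1 - k₁) (ν - p.1 - p.2))
    (k : ℕ) (ν : G) (hν : u k ν ≠ 0) :
    Even (deg ν) ∧ -2 * (k : ℤ) ≤ deg ν ∧ deg ν ≤ 2 := by
  induction k using Nat.strong_induction_on generalizing ν with
  | _ k ih =>
    by_cases hν₀ : ν = 0
    · subst hν₀
      simp
    rcases Nat.eq_zero_or_pos k with rfl | hk
    · rw [hu₀ ν hν₀] at hν
      rw [hR ν (div_ne_zero_iff.mp hν).1]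
      exact ⟨even_two, by omega, le_rfl⟩
    · rw [hu k hk ν hν₀] at hν
      obtain ⟨k₁, hk₁_mem, hterm⟩ := Finset.exists_ne_zero_of_sum_ne_zero (right_ne_zero_of_mul hν)
      obtain ⟨⟨μ₀, μ₁⟩, hp⟩ := exists_ne_zero_of_tsum_ne_zero hterm
      have hk₁ : k₁ < k := Finset.mem_range.mp hk₁_mem
      have hQμ₀ := hQ μ₀ (left_ne_zero_of_mul (left_ne_zero_of_mul hp))
      have hμ₁ := ih k₁ hk₁ μ₁ (right_ne_zero_of_mul (left_ne_zero_of_mul hp))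
      have hrest := ih (k - 1 - k₁) (by omega) _ (right_ne_zero_of_mul hp)
      have hdeg : deg ν = deg μ₁ + deg (ν - μ₀ - μ₁) - 2 := by
        simp only [map_sub, hQμ₀]
        ring
      have hk_eq : k₁ + (k - 1 - k₁) + 1 = k := by omega
      rw [hdeg, ← hk_eq]
      exact even_and_bounds_add_sub_two hμ₁ hrest

theorem last_component_range_general
    (A : ℕ) (ω₁ : Fin A → ℝ) (ω₀ Ω₀ : ℝ)
    (Q R : (Fin A → ℤ) × ℤ × ℤ → ℂ)
    (hR : ∀ ν : (Fin A → ℤ) × ℤ × ℤ, R ν ≠ 0 → ν.2.2 = 2)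
    (hQ : ∀ ν : (Fin A → ℤ) × ℤ × ℤ, Q ν ≠ 0 → ν.1 = 0 ∧ ν.2.2 = -2)
    (u : ℕ → (Fin A → ℤ) × ℤ × ℤ → ℂ)
    (hu00 : ∀ ν : (Fin A → ℤ) × ℤ × ℤ, ν ≠ 0 →
      u 0 ν = R ν / (Complex.I *
        (((∑ i, ω₁ i * (ν.1 i : ℝ)) + ω₀ * (ν.2.1 : ℝ) + Ω₀ * (ν.2.2 : ℝ) : ℝ) : ℂ)))
    (huk : ∀ k : ℕ, 1 ≤ k → ∀ ν : (Fin A → ℤ) × ℤ × ℤ, ν ≠ 0 →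
      u k ν = (Complex.I *
          (((∑ i, ω₁ i * (ν.1 i : ℝ)) + ω₀ * (ν.2.1 : ℝ) + Ω₀ * (ν.2.2 : ℝ) : ℝ) : ℂ))⁻¹ *
        ∑ k₁ ∈ Finset.range k,
          ∑' p : ((Fin A → ℤ) × ℤ × ℤ) × ((Fin A → ℤ) × ℤ × ℤ),
            Q p.1 * u k₁ p.2 * u (k - 1 - k₁) (ν - p.1 - p.2)) :
    ∀ (k : ℕ) (ν : (Fin A → ℤ) × ℤ × ℤ), ν ≠ 0 → u k ν ≠ 0 →
      Even ν.2.2 ∧ -2 * (k : ℤ) ≤ ν.2.2 ∧ ν.2.2 ≤ 2 := fun k ν _ hν =>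
  grade_range_of_ne_zero ((AddMonoidHom.snd ℤ ℤ).comp (AddMonoidHom.snd (Fin A → ℤ) (ℤ × ℤ))) Q R _ u hR
    (fun ν hν => (hQ ν hν).2) hu00 huk k ν hν

/-- Writing modes as `ν = (m, n₁, n₂) ∈ ℤ^A × ℤ × ℤ`, with `R` supported on
`n₂ = 2`, `Q` supported on `m = 0, n₂ = −2`, and zero modes `u^{(k)}_0 = α^{(k)}`,
the coefficients `u^{(k)}_ν` can be nonzero only if `n₂` is even and
`−2k ≤ n₂ ≤ 2`. -/
theorem last_component_range
    (A : ℕ) (hA : 1 ≤ A) (ω₁ : Fin A → ℝ) (ω₀ Ω₀ : ℝ)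
    (hω : ∀ ν : (Fin A → ℤ) × ℤ × ℤ, ν ≠ 0 →
      (∑ i, ω₁ i * (ν.1 i : ℝ)) + ω₀ * (ν.2.1 : ℝ) + Ω₀ * (ν.2.2 : ℝ) ≠ 0)
    (Q R : (Fin A → ℤ) × ℤ × ℤ → ℂ)
    (hR : ∀ ν : (Fin A → ℤ) × ℤ × ℤ, R ν ≠ 0 → ν.2.2 = 2)
    (hQ : ∀ ν : (Fin A → ℤ) × ℤ × ℤ, Q ν ≠ 0 → ν.1 = 0 ∧ ν.2.2 = -2)
    (α : ℕ → ℂ)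
    (u : ℕ → (Fin A → ℤ) × ℤ × ℤ → ℂ)
    (hu0 : ∀ k : ℕ, u k 0 = α k)
    (hu00 : ∀ ν : (Fin A → ℤ) × ℤ × ℤ, ν ≠ 0 →
      u 0 ν = R ν / (Complex.I *
        (((∑ i, ω₁ i * (ν.1 i : ℝ)) + ω₀ * (ν.2.1 : ℝ) + Ω₀ * (ν.2.2 : ℝ) : ℝ) : ℂ)))
    (hsum : ∀ k : ℕ, 1 ≤ k → ∀ ν : (Fin A → ℤ) × ℤ × ℤ, ν ≠ 0 → ∀ k₁ ∈ Finset.range k,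
      Summable (fun p : ((Fin A → ℤ) × ℤ × ℤ) × ((Fin A → ℤ) × ℤ × ℤ) =>
        ‖Q p.1 * u k₁ p.2 * u (k - 1 - k₁) (ν - p.1 - p.2)‖))
    (huk : ∀ k : ℕ, 1 ≤ k → ∀ ν : (Fin A → ℤ) × ℤ × ℤ, ν ≠ 0 →
      u k ν = (Complex.I *
          (((∑ i, ω₁ i * (ν.1 i : ℝ)) + ω₀ * (ν.2.1 : ℝ) + Ω₀ * (ν.2.2 : ℝ) : ℝ) : ℂ))⁻¹ *
        ∑ k₁ ∈ Finset.range k,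
          ∑' p : ((Fin A → ℤ) × ℤ × ℤ) × ((Fin A → ℤ) × ℤ × ℤ),
            Q p.1 * u k₁ p.2 * u (k - 1 - k₁) (ν - p.1 - p.2)) :
    ∀ (k : ℕ) (ν : (Fin A → ℤ) × ℤ × ℤ), ν ≠ 0 → u k ν ≠ 0 →
      Even ν.2.2 ∧ -2 * (k : ℤ) ≤ ν.2.2 ∧ ν.2.2 ≤ 2 :=
  last_component_range_general A ω₁ ω₀ Ω₀ Q R hR hQ u hu00 huk
end

section
/- Let A ≥ 1, ω₁ ∈ ℝ^A, ω₀, Ω₀ ∈ ℝ, and suppose ω = (ω₁, ω₀, Ω₀) ∈ ℝ^{A+2} satisfies the Diophantine condition with constants C₀ > 0 and τ > 0. Let q : ℤ → ℂ and r : ℤ^A × ℤ → ℂ satisfy |q_n| ≤ C e^{−κ|n|} and |r_{m,n}| ≤ C e^{−κ(|m|+|n|)} for some C, κ > 0, and assume r_{0,n} = 0 for all n ∈ ℤ. Then the series Q(t) = ∑_{n∈ℤ} q_n e^{i(nω₀ − 2Ω₀)t} and B(t) = ∑_{(m,n)∈ℤ^A×ℤ} r_{m,n} (i(m·ω₁ +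 nω₀ + 2Ω₀))^{−1} e^{i(m·ω₁ + nω₀ + 2Ω₀)t} are absolutely convergent (all the denominators being nonzero by the Diophantine condition), and lim_{T→∞} (1/(2T)) ∫_{−T}^{T} Q(t) B(t) dt = 0. -/
/-!
`Q · B` is itself an absolutely convergent trigonometric series, with coefficients
`q_n r_{m,n'} / (i(m·ω₁ + n'ω₀ + 2Ω₀))` and frequencies
`(nω₀ − 2Ω₀) + (m·ω₁ + n'ω₀ + 2Ω₀) = m·ω₁ + (n + n')ω₀`, in which the `Ω₀` terms cancel.
The coefficients with `m = 0` vanish because `r_{0,n'} = 0`, and for `m ≠ 0` the Diophantine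
condition makes the frequency nonzero. The mean of `e^{iλt}` over `[-T, T]` is `O(1/(λT))` for
`λ ≠ 0`, and dominated convergence carries the limit through the sum.
Absolute convergence of `B` comes from the small-divisor bound
`|m·ω₁ + nω₀ + 2Ω₀|⁻¹ ≤ (|m| + |n| + 2)^τ / C₀`, whose polynomial growth is absorbed by the
exponential decay of `r`.
-/

open Filter Topology

lemma summable_exp_neg_mul_abs_int {c : ℝ} (hc : 0 < c) :
    Summable fun n : ℤ => Real.exp (-(c * |(n : ℝ)|)) := by
  have h : Summable fun n : ℕ => Real.exp (-(c * |((n : ℤ) : ℝ)|)) := by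
    simpa [mul_comm] using Real.summable_exp_nat_mul_iff.mpr (neg_neg_iff_pos.mpr hc)
  exact .of_nat_of_neg h (by simpa using h)

lemma summable_exp_neg_mul_sum_abs {c : ℝ} (hc : 0 < c) (d : ℕ) :
    Summable fun m : Fin d → ℤ => Real.exp (-(c * ∑ i, |(m i : ℝ)|)) := by
  induction d with
  | zero => exact .of_finite
  | succ d ih =>
    rw [← (Fin.consEquiv fun _ : Fin (d + 1) => ℤ).summable_iff]
    refine ((summable_exp_neg_mul_abs_int hc).mul_of_nonneg ih (fun _ => (Real.exp_pos _).le)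
      (fun _ => (Real.exp_pos _).le)).congr fun ⟨a, m⟩ => ?_
    simp [Fin.sum_univ_succ, ← Real.exp_add, mul_add, add_comm]

def l1Norm {ι : Type*} [Fintype ι] (p : (ι → ℤ) × ℤ) : ℝ :=
  ∑ i, |(p.1 i : ℝ)| + |(p.2 : ℝ)|

lemma l1Norm_nonneg {ι : Type*} [Fintype ι] (p : (ι → ℤ) × ℤ) : 0 ≤ l1Norm p :=
  add_nonneg (Finset.sum_nonneg fun _ _ => abs_nonneg _) (abs_nonneg _)

lemma summable_exp_neg_mul_l1Norm {c : ℝ} (hc : 0 < c) (d : ℕ) :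
    Summable fun p : (Fin d → ℤ) × ℤ => Real.exp (-(c * l1Norm p)) :=
  ((summable_exp_neg_mul_sum_abs hc d).mul_of_nonneg (summable_exp_neg_mul_abs_int hc)
    (fun _ => (Real.exp_pos _).le) (fun _ => (Real.exp_pos _).le)).congr fun p => by
      simp [l1Norm, ← Real.exp_add, mul_add, add_comm]

lemma exists_rpow_le_mul_exp {τ ε : ℝ} (hτ : 0 < τ) (hε : 0 < ε) :
    ∃ K : ℝ, ∀ y : ℝ, 0 < y → y ^ τ ≤ K * Real.exp (ε * y) := by
  refine ⟨Real.exp (-(τ * (1 + Real.log (ε / τ)))), fun y hy => ?_⟩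
  have hc : 0 < ε / τ := div_pos hε hτ
  have hlog : Real.log (ε / τ) + Real.log y ≤ ε / τ * y - 1 := by
    rw [← Real.log_mul hc.ne' hy.ne']
    exact Real.log_le_sub_one_of_pos (mul_pos hc hy)
  rw [← Real.exp_add, Real.rpow_def_of_pos hy, Real.exp_le_exp]
  have := mul_le_mul_of_nonneg_left hlog hτ.le
  rw [mul_sub, ← mul_assoc, mul_div_cancel₀ _ hτ.ne'] at this
  linarith

lemma summable_rpow_mul_exp_neg_l1Norm {τ κ : ℝ} (hτ : 0 < τ) (hκ : 0 < κ) (d : ℕ) :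
    Summable fun p : (Fin d → ℤ) × ℤ => (l1Norm p + 2) ^ τ * Real.exp (-κ * l1Norm p) := by
  obtain ⟨K, hK⟩ := exists_rpow_le_mul_exp hτ (half_pos hκ)
  refine .of_nonneg_of_le (fun p => mul_nonneg
    (Real.rpow_nonneg (by linarith [l1Norm_nonneg p]) _) (Real.exp_pos _).le) (fun p => ?_)
    ((summable_exp_neg_mul_l1Norm (half_pos hκ) d).mul_left (K * Real.exp κ))
  have hS := l1Norm_nonneg p
  calc (l1Norm p + 2) ^ τ * Real.exp (-κ * l1Norm p)
      ≤ K * Real.exp (κ / 2 * (l1Norm p + 2)) * Real.exp (-κ * l1Norm p) := by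
        gcongr; exact hK _ (by linarith)
    _ = K * Real.exp κ * Real.exp (-(κ / 2 * l1Norm p)) := by
        rw [mul_assoc, mul_assoc, ← Real.exp_add, ← Real.exp_add]; ring_nf

def IsDiophantine {ι : Type*} [Fintype ι] (ω₁ : ι → ℝ) (ω₀ Ω₀ C₀ τ : ℝ) : Prop :=
  ∀ ν : (ι → ℤ) × ℤ × ℤ, ν ≠ 0 →
    C₀ / ((∑ i, |(ν.1 i : ℝ)|) + |(ν.2.1 : ℝ)| + |(ν.2.2 : ℝ)|) ^ τ ≤
      |(∑ i, ω₁ i * (ν.1 i : ℝ)) + ω₀ * (ν.2.1 : ℝ) + Ω₀ * (ν.2.2 : ℝ)|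

lemma sum_abs_add_abs_add_abs_pos {ι : Type*} [Fintype ι] {m : ι → ℤ} {n k : ℤ}
    (h : (m, n, k) ≠ 0) : 0 < ∑ i, |(m i : ℝ)| + |(n : ℝ)| + |(k : ℝ)| := by
  by_contra! hle
  have hm := Finset.sum_nonneg fun i (_ : i ∈ Finset.univ) => abs_nonneg (m i : ℝ)
  have hn := abs_nonneg (n : ℝ)
  have hk := abs_nonneg (k : ℝ)
  have hm0 := (Finset.sum_eq_zero_iff_of_nonneg fun i _ => abs_nonneg (m i : ℝ)).mp
    (by linarith)
  have hn0 : (n : ℝ) = 0 := abs_eq_zero.mp (by linarith)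
  have hk0 : (k : ℝ) = 0 := abs_eq_zero.mp (by linarith)
  refine h (Prod.ext (funext fun i => ?_) (Prod.ext ?_ ?_))
  · simpa using hm0 i (Finset.mem_univ i)
  · exact_mod_cast hn0
  · exact_mod_cast hk0

namespace IsDiophantine

variable {ι : Type*} [Fintype ι] {ω₁ : ι → ℝ} {ω₀ Ω₀ C₀ τ : ℝ}

lemma freq_ne_zero (h : IsDiophantine ω₁ ω₀ Ω₀ C₀ τ) (hC₀ : 0 < C₀) {m : ι → ℤ} {n k : ℤ}
    (hν : (m, n, k) ≠ 0) : ∑ i, ω₁ i * (m i : ℝ) + ω₀ * n + Ω₀ * k ≠ 0 := by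
  have hdio := h (m, n, k) hν
  dsimp only at hdio
  rw [← abs_pos]
  exact (div_pos hC₀ (Real.rpow_pos_of_pos (sum_abs_add_abs_add_abs_pos hν) τ)).trans_le hdio

lemma inv_abs_le (h : IsDiophantine ω₁ ω₀ Ω₀ C₀ τ) (hC₀ : 0 < C₀) (p : (ι → ℤ) × ℤ) :
    |∑ i, ω₁ i * (p.1 i : ℝ) + p.2 * ω₀ + 2 * Ω₀|⁻¹ ≤ (l1Norm p + 2) ^ τ / C₀ := by
  have hν : (p.1, p.2, (2 : ℤ)) ≠ 0 := fun h0 => by simpa using congrArg (·.2.2) h0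
  have hpos : 0 < (l1Norm p + 2) ^ τ := Real.rpow_pos_of_pos (by linarith [l1Norm_nonneg p]) τ
  have hdio : C₀ / (l1Norm p + 2) ^ τ ≤ |∑ i, ω₁ i * (p.1 i : ℝ) + p.2 * ω₀ + 2 * Ω₀| := by
    have h2 := h (p.1, p.2, 2) hν
    dsimp only at h2
    convert h2 using 3 <;> push_cast
    · simp [l1Norm]
    all_goals ring
  rw [← inv_div]
  exact inv_anti₀ (div_pos hC₀ hpos) hdio

end IsDiophantine

lemma norm_mul_exp_I_mul (a : ℂ) (x t : ℝ) :
    ‖a * Complex.exp (Complex.I * (x : ℂ) * t)‖ = ‖a‖ := by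
  simp [Complex.norm_exp]

lemma norm_integral_exp_I_mul_le {μ : ℝ} (hμ : μ ≠ 0) (T : ℝ) :
    ‖∫ t in (-T)..T, Complex.exp (Complex.I * (μ : ℂ) * t)‖ ≤ 2 / |μ| := by
  have hIμ : Complex.I * (μ : ℂ) ≠ 0 := mul_ne_zero Complex.I_ne_zero (by exact_mod_cast hμ)
  rw [integral_exp_mul_complex hIμ, norm_div, norm_mul, Complex.norm_I, one_mul,
    Complex.norm_real, Real.norm_eq_abs]
  gcongr
  refine (norm_sub_le _ _).trans_eq ?_
  simp [Complex.norm_exp]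
  norm_num

lemma norm_average_exp_I_mul_le_one (μ : ℝ) {T : ℝ} (hT : 0 < T) :
    ‖(1 / (2 * T)) • ∫ t in (-T)..T, Complex.exp (Complex.I * (μ : ℂ) * t)‖ ≤ 1 := by
  have hint : ‖∫ t in (-T)..T, Complex.exp (Complex.I * (μ : ℂ) * t)‖ ≤ 1 * |T - -T| :=
    intervalIntegral.norm_integral_le_of_norm_le_const fun t _ => by
      simpa using (norm_mul_exp_I_mul 1 μ t).le
  rw [one_mul, abs_of_pos (by linarith), sub_neg_eq_add, ← two_mul] at hint
  rw [norm_smul, Real.norm_of_nonneg (by positivity)]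
  calc 1 / (2 * T) * ‖∫ t in (-T)..T, Complex.exp (Complex.I * (μ : ℂ) * t)‖
      ≤ 1 / (2 * T) * (2 * T) := by gcongr
    _ = 1 := by field_simp

lemma tendsto_average_exp_I_mul {μ : ℝ} (hμ : μ ≠ 0) :
    Tendsto (fun T : ℝ => (1 / (2 * T)) • ∫ t in (-T)..T, Complex.exp (Complex.I * (μ : ℂ) * t))
      atTop (𝓝 0) := by
  have hinv : Tendsto (fun T : ℝ => 1 / (2 * T)) atTop (𝓝 0) :=
    tendsto_const_nhds.div_atTop (tendsto_id.const_mul_atTop two_pos)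
  refine squeeze_zero_norm' (a := fun T => 1 / (2 * T) * (2 / |μ|)) ?_
    (by simpa using hinv.mul_const (2 / |μ|))
  filter_upwards [eventually_gt_atTop 0] with T hT
  rw [norm_smul, Real.norm_of_nonneg (by positivity)]
  gcongr
  exact norm_integral_exp_I_mul_le hμ T

lemma integral_tsum_exp_I_mul {ι : Type*} [Countable ι] {c : ι → ℂ}
    (hc : Summable fun z => ‖c z‖) (μ : ι → ℝ) (a b : ℝ) :
    ∫ t in a..b, ∑' z, c z * Complex.exp (Complex.I * (μ z : ℂ) * t) =
      ∑' z, c z * ∫ t in a..b, Complex.exp (Complex.I * (μ z : ℂ) * t) := by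
  simp_rw [← intervalIntegral.integral_const_mul]
  refine (intervalIntegral.hasSum_integral_of_dominated_convergence (fun z _ => ‖c z‖)
    (fun z => (Continuous.aestronglyMeasurable (by fun_prop)))
    (fun z => .of_forall fun t _ => (norm_mul_exp_I_mul _ _ _).le)
    (.of_forall fun _ _ => hc) intervalIntegrable_const
    (.of_forall fun t _ => ?_)).tsum_eq.symm
  exact (hc.of_norm_bounded fun z => (norm_mul_exp_I_mul _ _ _).le).hasSum

theorem tendsto_average_tsum_exp_I_mul {ι : Type*} [Countable ι] {c : ι → ℂ}
    (hc : Summable fun z => ‖c z‖) {μ : ι → ℝ} (hμ : ∀ z, c z ≠ 0 → μ z ≠ 0) :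
    Tendsto (fun T : ℝ => (1 / (2 * T)) •
        ∫ t in (-T)..T, ∑' z, c z * Complex.exp (Complex.I * (μ z : ℂ) * t))
      atTop (𝓝 0) := by
  simp_rw [integral_tsum_exp_I_mul hc, ← tsum_const_smul'', ← mul_smul_comm]
  rw [show 𝓝 (0 : ℂ) = 𝓝 (∑' _ : ι, (0 : ℂ)) by rw [tsum_zero]]
  refine tendsto_tsum_of_dominated_convergence hc (fun z => ?_) ?_
  · by_cases hz : c z = 0
    · simp [hz]
    · simpa using (tendsto_average_exp_I_mul (hμ z hz)).const_mul (c z)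
  · filter_upwards [eventually_gt_atTop 0] with T hT z
    rw [norm_mul]
    exact mul_le_of_le_one_right (norm_nonneg _) (norm_average_exp_I_mul_le_one _ hT)

lemma tsum_mul_tsum_exp_I_mul {ι κ : Type*} {a : ι → ℂ} {b : κ → ℂ}
    (ha : Summable fun i => ‖a i‖) (hb : Summable fun j => ‖b j‖) (α : ι → ℝ) (β : κ → ℝ)
    (t : ℝ) :
    (∑' i, a i * Complex.exp (Complex.I * (α i : ℂ) * t)) *
        (∑' j, b j * Complex.exp (Complex.I * (β j : ℂ) * t)) =
      ∑' z : ι × κ, a z.1 * b z.2 * Complex.exp (Complex.I * ((α z.1 + β z.2 : ℝ) : ℂ) * t) := by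
  rw [tsum_mul_tsum_of_summable_norm (by simpa only [norm_mul_exp_I_mul] using ha)
    (by simpa only [norm_mul_exp_I_mul] using hb)]
  refine tsum_congr fun z => ?_
  rw [Complex.ofReal_add, mul_add, add_mul, Complex.exp_add]
  ring

theorem tendsto_average_tsum_mul_tsum_exp_I_mul {ι κ : Type*} [Countable ι] [Countable κ]
    {a : ι → ℂ} {b : κ → ℂ} (ha : Summable fun i => ‖a i‖) (hb : Summable fun j => ‖b j‖)
    {α : ι → ℝ} {β : κ → ℝ} (hαβ : ∀ i j, a i * b j ≠ 0 → α i + β j ≠ 0) :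
    Tendsto (fun T : ℝ => (1 / (2 * T)) • ∫ t in (-T)..T,
        (∑' i, a i * Complex.exp (Complex.I * (α i : ℂ) * t)) *
          (∑' j, b j * Complex.exp (Complex.I * (β j : ℂ) * t)))
      atTop (𝓝 0) := by
  simp_rw [tsum_mul_tsum_exp_I_mul ha hb]
  exact tendsto_average_tsum_exp_I_mul (ha.mul_norm hb) fun z => hαβ z.1 z.2

theorem first_order_obstruction_vanishes_general
    (A : ℕ) (ω₁ : Fin A → ℝ) (ω₀ Ω₀ : ℝ)
    (C₀ τ : ℝ) (hC₀ : 0 < C₀) (hτ : 0 < τ)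
    (hdio : ∀ ν : (Fin A → ℤ) × ℤ × ℤ, ν ≠ 0 →
      C₀ / ((∑ i, |(ν.1 i : ℝ)|) + |(ν.2.1 : ℝ)| + |(ν.2.2 : ℝ)|) ^ τ ≤
        |(∑ i, ω₁ i * (ν.1 i : ℝ)) + ω₀ * (ν.2.1 : ℝ) + Ω₀ * (ν.2.2 : ℝ)|)
    (q : ℤ → ℂ) (r : (Fin A → ℤ) × ℤ → ℂ) (C κ : ℝ) (hκ : 0 < κ)
    (hq : ∀ n : ℤ, ‖q n‖ ≤ C * Real.exp (-κ * |(n : ℝ)|))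
    (hr : ∀ (m : Fin A → ℤ) (n : ℤ), ‖r (m, n)‖ ≤
      C * Real.exp (-κ * ((∑ i, |(m i : ℝ)|) + |(n : ℝ)|)))
    (hr0 : ∀ n : ℤ, r (0, n) = 0) :
    (∀ t : ℝ, Summable (fun n : ℤ =>
      ‖q n * Complex.exp (Complex.I * (((n : ℝ) * ω₀ - 2 * Ω₀ : ℝ) : ℂ) * t)‖)) ∧
    (∀ t : ℝ, Summable (fun p : (Fin A → ℤ) × ℤ =>
      ‖r p *
        (Complex.I * (((∑ i, ω₁ i * (p.1 i : ℝ)) + (p.2 : ℝ) * ω₀ + 2 * Ω₀ : ℝ) : ℂ))⁻¹ *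
        Complex.exp (Complex.I *
          (((∑ i, ω₁ i * (p.1 i : ℝ)) + (p.2 : ℝ) * ω₀ + 2 * Ω₀ : ℝ) : ℂ) * t)‖)) ∧
    Tendsto (fun T : ℝ => (1 / (2 * T)) • ∫ t in (-T)..T,
        (∑' n : ℤ, q n * Complex.exp (Complex.I * (((n : ℝ) * ω₀ - 2 * Ω₀ : ℝ) : ℂ) * t)) *
        (∑' p : (Fin A → ℤ) × ℤ, r p *
          (Complex.I * (((∑ i, ω₁ i * (p.1 i : ℝ)) + (p.2 : ℝ) * ω₀ + 2 * Ω₀ : ℝ) : ℂ))⁻¹ *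
          Complex.exp (Complex.I *
            (((∑ i, ω₁ i * (p.1 i : ℝ)) + (p.2 : ℝ) * ω₀ + 2 * Ω₀ : ℝ) : ℂ) * t)))
      atTop (nhds 0) := by
  set β : (Fin A → ℤ) × ℤ → ℝ := fun p => ∑ i, ω₁ i * (p.1 i : ℝ) + p.2 * ω₀ + 2 * Ω₀
  set b : (Fin A → ℤ) × ℤ → ℂ := fun p => r p * (Complex.I * (β p : ℂ))⁻¹
  have hω : IsDiophantine ω₁ ω₀ Ω₀ C₀ τ := hdio
  have hQ : Summable fun n => ‖q n‖ :=
    .of_nonneg_of_le (fun _ => norm_nonneg _) (fun n => by simpa [neg_mul] using hq n)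
      ((summable_exp_neg_mul_abs_int hκ).mul_left C)
  have hB : Summable fun p => ‖b p‖ := by
    refine .of_nonneg_of_le (fun _ => norm_nonneg _) (fun p => ?_)
      ((summable_rpow_mul_exp_neg_l1Norm hτ hκ A).mul_left (C / C₀))
    calc ‖b p‖ = ‖r p‖ * |β p|⁻¹ := by simp [b]
      _ ≤ C * Real.exp (-κ * l1Norm p) * ((l1Norm p + 2) ^ τ / C₀) :=
        mul_le_mul (hr p.1 p.2) (hω.inv_abs_le hC₀ p) (by positivity)
          ((norm_nonneg _).trans (hr p.1 p.2))
      _ = C / C₀ * ((l1Norm p + 2) ^ τ * Real.exp (-κ * l1Norm p)) := by ring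
  refine ⟨fun t => by simpa only [norm_mul_exp_I_mul] using hQ,
    fun t => by simpa only [norm_mul_exp_I_mul] using hB,
    tendsto_average_tsum_mul_tsum_exp_I_mul hQ hB fun n ⟨m, n'⟩ hqb => ?_⟩
  have hm : m ≠ 0 := by
    rintro rfl
    simp [b, hr0] at hqb
  have hfreq := hω.freq_ne_zero hC₀ (m := m) (n := n + n') (k := 0) (by simp [hm])
  convert hfreq using 1
  push_cast
  ring

/-- If the perturbing potential has zero average (`r_{0,n} = 0`), then the
first-order obstruction `G₁ = ⟨Q ∫R⟩` vanishes: with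
`Q(t) = ∑ q_n e^{i(nω₀−2Ω₀)t}` and
`B(t) = ∑ r_{m,n} e^{i(m·ω₁+nω₀+2Ω₀)t}/(i(m·ω₁+nω₀+2Ω₀))`, both series converge
absolutely and the average of `Q·B` is zero. -/
theorem first_order_obstruction_vanishes
    (A : ℕ) (hA : 1 ≤ A) (ω₁ : Fin A → ℝ) (ω₀ Ω₀ : ℝ)
    (C₀ τ : ℝ) (hC₀ : 0 < C₀) (hτ : 0 < τ)
    (hdio : ∀ ν : (Fin A → ℤ) × ℤ × ℤ, ν ≠ 0 →
      C₀ / ((∑ i, |(ν.1 i : ℝ)|) + |(ν.2.1 : ℝ)| + |(ν.2.2 : ℝ)|) ^ τ ≤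
        |(∑ i, ω₁ i * (ν.1 i : ℝ)) + ω₀ * (ν.2.1 : ℝ) + Ω₀ * (ν.2.2 : ℝ)|)
    (q : ℤ → ℂ) (r : (Fin A → ℤ) × ℤ → ℂ) (C κ : ℝ) (hC : 0 < C) (hκ : 0 < κ)
    (hq : ∀ n : ℤ, ‖q n‖ ≤ C * Real.exp (-κ * |(n : ℝ)|))
    (hr : ∀ (m : Fin A → ℤ) (n : ℤ), ‖r (m, n)‖ ≤
      C * Real.exp (-κ * ((∑ i, |(m i : ℝ)|) + |(n : ℝ)|)))
    (hr0 : ∀ n : ℤ, r (0, n) = 0) :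
    (∀ t : ℝ, Summable (fun n : ℤ =>
      ‖q n * Complex.exp (Complex.I * (((n : ℝ) * ω₀ - 2 * Ω₀ : ℝ) : ℂ) * t)‖)) ∧
    (∀ t : ℝ, Summable (fun p : (Fin A → ℤ) × ℤ =>
      ‖r p *
        (Complex.I * (((∑ i, ω₁ i * (p.1 i : ℝ)) + (p.2 : ℝ) * ω₀ + 2 * Ω₀ : ℝ) : ℂ))⁻¹ *
        Complex.exp (Complex.I *
          (((∑ i, ω₁ i * (p.1 i : ℝ)) + (p.2 : ℝ) * ω₀ + 2 * Ω₀ : ℝ) : ℂ) * t)‖)) ∧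
    Tendsto (fun T : ℝ => (1 / (2 * T)) • ∫ t in (-T)..T,
        (∑' n : ℤ, q n * Complex.exp (Complex.I * (((n : ℝ) * ω₀ - 2 * Ω₀ : ℝ) : ℂ) * t)) *
        (∑' p : (Fin A → ℤ) × ℤ, r p *
          (Complex.I * (((∑ i, ω₁ i * (p.1 i : ℝ)) + (p.2 : ℝ) * ω₀ + 2 * Ω₀ : ℝ) : ℂ))⁻¹ *
          Complex.exp (Complex.I *
            (((∑ i, ω₁ i * (p.1 i : ℝ)) + (p.2 : ℝ) * ω₀ + 2 * Ω₀ : ℝ) : ℂ) * t)))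
      atTop (nhds 0) :=
  first_order_obstruction_vanishes_general A ω₁ ω₀ Ω₀ C₀ τ hC₀ hτ hdio q r C κ hκ hq hr hr0
end
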